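/- Srivastava–Pintér type theorem (second form): for n ∈ ℕ₀ and m ∈ ℕ, 𝔊_{n,q}^{(α)}(x,y) = ∑_{k=0}^n [n choose k]_q (1/(m^{n-k-1}[k+1]_q)) · [ 2[k+1]_q ∑_{j=0}^k [k choose j]_q (1/m − 1)_q^{k-j} 𝔊_{j,q}^{(α-1)}(0,y) − ∑_{j=0}^{k+1} [k+1 choose j]_q (1/m − 1)_q^{k+1-j} 𝔊_{j,q}^{(α)}(0,y) − 𝔊_{k+1,q}^{(α)}(0,y) ] · 𝔅_{n-k,q}(mx, 0), where (a+b)_q^r = ∑_{j=0}^r [r choose j]_q q^{j(j-1)/2} a^{r-j} b^j. -/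

import Mathlib

open PowerSeries Finset

/-- The `q`-integer `[n]_q = 1 + q + ⋯ + q^(n-1)`. -/
noncomputable def qInt (q : ℂ) (n : ℕ) : ℂ := ∑ i ∈ Finset.range n, q ^ i

/-- The `q`-factorial `[n]_q!`. -/
noncomputable def qFact (q : ℂ) : ℕ → ℂ
  | 0 => 1
  | n + 1 => qFact q n * qInt q (n + 1)

/-- The Gaussian (`q`-binomial) coefficient. -/
noncomputable def qBinom (q : ℂ) (n k : ℕ) : ℂ := qFact q n / (qFact q k * qFact q (n - k))

/-- The formal power series `e_q(tx) = ∑ x^n t^n/[n]_q!`. -/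
noncomputable def qExpSeries (q : ℂ) (x : ℂ) : PowerSeries ℂ :=
  PowerSeries.mk fun n => x ^ n / qFact q n

/-- The formal power series `E_q(ty) = ∑ q^(n(n-1)/2) y^n t^n/[n]_q!`. -/
noncomputable def qExpSeries' (q : ℂ) (y : ℂ) : PowerSeries ℂ :=
  PowerSeries.mk fun n => q ^ (n * (n - 1) / 2) * y ^ n / qFact q n

/-- Generating series `(2t/(e_q(t)+1))^α e_q(tx) E_q(ty)` of the `q`-Genocchi polynomials. -/
noncomputable def qGenocchiSeries (q : ℂ) (α : ℕ) (x y : ℂ) : PowerSeries ℂ :=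
  (PowerSeries.C 2 * PowerSeries.X * (qExpSeries q 1 + 1)⁻¹) ^ α *
    qExpSeries q x * qExpSeries' q y

/-- The `q`-Genocchi polynomial `𝔊_{n,q}^{(α)}(x,y)`. -/
noncomputable def qGenocchi (q : ℂ) (α : ℕ) (x y : ℂ) (n : ℕ) : ℂ :=
  qFact q n * PowerSeries.coeff n (qGenocchiSeries q α x y)

/-- The `q`-Bernoulli polynomial `𝔅_{n,q}(x,y)`, defined via
`(t/(e_q(t)-1)) e_q(tx) E_q(ty) = ∑ 𝔅_{n,q}(x,y) t^n/[n]_q!`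
(note `t/(e_q(t)-1)` is the inverse of the series `∑ t^n/[n+1]_q!`). -/
noncomputable def qBernoulli (q : ℂ) (x y : ℂ) (n : ℕ) : ℂ :=
  qFact q n * PowerSeries.coeff n
    ((PowerSeries.mk fun k => (qFact q (k + 1))⁻¹)⁻¹ * qExpSeries q x * qExpSeries' q y)

/-- The Gauss polynomial `(x+y)_q^n = ∑_k [n k]_q q^(k(k-1)/2) x^(n-k) y^k`. -/
noncomputable def qAddPow (q : ℂ) (x y : ℂ) (n : ℕ) : ℂ :=
  ∑ k ∈ Finset.range (n + 1), qBinom q n k * q ^ (k * (k - 1) / 2) * x ^ (n - k) * y ^ k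

/-!
With `K(t) = (e_q(t) - 1)/t`, split the generating function as
`𝔊^{(α)}(x,y) = [𝔊^{(α)}(0,y) K(t/m)] · [K(t/m)⁻¹ e_q(tx)]`; the second factor generates
`m⁻ʲ 𝔅_j(mx,0)`. For the first, `t K(t/m) = m (e_q(t/m) - 1)`, and since `e_q(t) E_q(-t) = 1` we may
write `e_q(t/m) = (e_q(t/m) E_q(-t)) e_q(t)`. By the `q`-binomial theorem `e_q(t/m) E_q(-t)` generates
`(1/m - 1)_qᵏ`, while `e_q(t) (2t/(e_q(t)+1))^α = 2t (2t/(e_q(t)+1))^(α-1) - (2t/(e_q(t)+1))^α`.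
Comparing coefficients of the product of the two factors gives the formula.
-/

section

variable (q : ℂ)

lemma qFact_succ (n : ℕ) : qFact q (n + 1) = qFact q n * qInt q (n + 1) := rfl

lemma qFact_ne_zero (hq : ∀ n : ℕ, qInt q (n + 1) ≠ 0) (n : ℕ) : qFact q n ≠ 0 := by
  induction n with
  | zero => exact one_ne_zero
  | succ n ih => exact mul_ne_zero ih (hq n)

lemma qInt_add (a b : ℕ) : qInt q (a + b) = qInt q a + q ^ a * qInt q b := by
  simp only [qInt, sum_range_add, mul_sum, pow_add]

lemma qBinom_zero_right (hq : ∀ n : ℕ, qInt q (n + 1) ≠ 0) (n : ℕ) : qBinom q n 0 = 1 := by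
  simp [qBinom, qFact, qFact_ne_zero q hq]

lemma qBinom_self (hq : ∀ n : ℕ, qInt q (n + 1) ≠ 0) (n : ℕ) : qBinom q n n = 1 := by
  simp [qBinom, qFact, qFact_ne_zero q hq]

lemma qBinom_symm {n k : ℕ} (hk : k ≤ n) : qBinom q n (n - k) = qBinom q n k := by
  rw [qBinom, qBinom, Nat.sub_sub_self hk, mul_comm]

lemma qBinom_succ_succ (hq : ∀ n : ℕ, qInt q (n + 1) ≠ 0) {n k : ℕ} (hk : k < n) :
    qBinom q (n + 1) (k + 1) = qBinom q n k + q ^ (k + 1) * qBinom q n (k + 1) := by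
  obtain ⟨j, rfl⟩ := Nat.exists_eq_add_of_lt hk
  have hsplit := qInt_add q (k + 1) (j + 1)
  rw [show k + 1 + (j + 1) = k + j + 1 + 1 by ring] at hsplit
  simp only [qBinom, show k + j + 1 + 1 - (k + 1) = j + 1 by omega,
    show k + j + 1 - k = j + 1 by omega, show k + j + 1 - (k + 1) = j by omega,
    qFact_succ q (k + j + 1), qFact_succ q k, qFact_succ q j]
  field_simp [qFact_ne_zero q hq, hq]
  linear_combination hsplit

lemma qAddPow_zero (x y : ℂ) : qAddPow q x y 0 = 1 := by
  simp [qAddPow, qBinom, qFact]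

/-- By `q`-Pascal the terms telescope. -/
lemma qAddPow_one_neg_one_succ (hq : ∀ n : ℕ, qInt q (n + 1) ≠ 0) (n : ℕ) :
    qAddPow q 1 (-1) (n + 1) = 0 := by
  let g : ℕ → ℂ := fun k => qBinom q n k * q ^ ((k + 1) * (k + 1 - 1) / 2) * (-1) ^ k
  have hterm : ∀ i ∈ range n, qBinom q (n + 1) (i + 1) * q ^ ((i + 1) * (i + 1 - 1) / 2) *
      1 ^ (n + 1 - (i + 1)) * (-1) ^ (i + 1) = g (i + 1) - g i := by
    intro i hi
    rw [qBinom_succ_succ q hq (mem_range.mp hi), one_pow, mul_one]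
    simp only [g, Nat.triangle_succ (i + 1), pow_add]
    ring
  rw [qAddPow, sum_range_succ', sum_range_succ, sum_congr rfl hterm, sum_range_sub g]
  simp only [g, qBinom_self q hq, qBinom_zero_right q hq, add_tsub_cancel_right, tsub_self,
    pow_zero, one_pow]
  ring

noncomputable def qEgf (a : ℕ → ℂ) : PowerSeries ℂ := PowerSeries.mk fun n => a n / qFact q n

@[simp] lemma coeff_qEgf (a : ℕ → ℂ) (n : ℕ) : coeff n (qEgf q a) = a n / qFact q n :=
  coeff_mk _ _

@[simp] lemma constantCoeff_qEgf (a : ℕ → ℂ) : constantCoeff (qEgf q a) = a 0 := by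
  rw [← coeff_zero_eq_constantCoeff_apply, coeff_qEgf, qFact, div_one]

lemma eq_qEgf_of_coeff (hq : ∀ n : ℕ, qInt q (n + 1) ≠ 0) {f : PowerSeries ℂ} {a : ℕ → ℂ}
    (h : ∀ n, qFact q n * coeff n f = a n) : f = qEgf q a := by
  ext n
  rw [coeff_qEgf, ← h, mul_div_cancel_left₀ _ (qFact_ne_zero q hq n)]

lemma qEgf_mul (hq : ∀ n : ℕ, qInt q (n + 1) ≠ 0) (a b : ℕ → ℂ) :
    qEgf q a * qEgf q b =
      qEgf q fun n => ∑ k ∈ range (n + 1), qBinom q n k * a k * b (n - k) := by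
  ext n
  rw [coeff_mul, Nat.sum_antidiagonal_eq_sum_range_succ_mk, coeff_qEgf, sum_div]
  refine sum_congr rfl fun k hk => ?_
  simp only [coeff_qEgf, qBinom]
  field_simp [qFact_ne_zero q hq]

lemma rescale_qEgf (c : ℂ) (a : ℕ → ℂ) :
    rescale c (qEgf q a) = qEgf q fun n => c ^ n * a n := by
  ext n
  simp [mul_div_assoc]

lemma qExpSeries_eq_qEgf (x : ℂ) : qExpSeries q x = qEgf q (x ^ ·) := rfl

lemma qExpSeries'_eq_qEgf (y : ℂ) :
    qExpSeries' q y = qEgf q fun n => q ^ (n * (n - 1) / 2) * y ^ n := rfl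

@[simp] lemma qExpSeries_zero : qExpSeries q 0 = 1 := by
  ext (_ | n) <;> simp [qExpSeries_eq_qEgf, qFact]

@[simp] lemma qExpSeries'_zero : qExpSeries' q 0 = 1 := by
  ext (_ | n) <;> simp [qExpSeries'_eq_qEgf, qFact]

lemma qExpSeries_mul_qExpSeries' (hq : ∀ n : ℕ, qInt q (n + 1) ≠ 0) (x y : ℂ) :
    qExpSeries q x * qExpSeries' q y = qEgf q (qAddPow q x y) := by
  rw [qExpSeries_eq_qEgf, qExpSeries'_eq_qEgf, qEgf_mul q hq]
  congr 1; ext n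
  rw [qAddPow, ← sum_range_reflect]
  refine sum_congr rfl fun k hk => ?_
  have hk : k ≤ n := Nat.lt_succ_iff.mp (mem_range.mp hk)
  rw [Nat.add_sub_cancel, qBinom_symm q hk, Nat.sub_sub_self hk]
  ring

lemma qExpSeries_one_mul_qExpSeries'_neg_one (hq : ∀ n : ℕ, qInt q (n + 1) ≠ 0) :
    qExpSeries q 1 * qExpSeries' q (-1) = 1 := by
  rw [qExpSeries_mul_qExpSeries' q hq]
  ext (_ | n) <;> simp [qAddPow_zero, qAddPow_one_neg_one_succ q hq, qFact]

noncomputable def qGenocchiFactor : PowerSeries ℂ := C 2 * X * (qExpSeries q 1 + 1)⁻¹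

/-- `(e_q(t) - 1) / t`, the reciprocal of the `q`-Bernoulli factor `t / (e_q(t) - 1)`. -/
noncomputable def qBernoulliKernel : PowerSeries ℂ := PowerSeries.mk fun k => (qFact q (k + 1))⁻¹

lemma qExpSeries_one_mul_qGenocchiFactor :
    qExpSeries q 1 * qGenocchiFactor q = C 2 * X - qGenocchiFactor q := by
  have h : constantCoeff (qExpSeries q 1 + 1) ≠ 0 := by simp [qExpSeries_eq_qEgf]
  rw [eq_sub_iff_add_eq, qGenocchiFactor, ← add_one_mul, mul_left_comm,
    PowerSeries.mul_inv_cancel _ h, mul_one]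

lemma qGenocchiSeries_eq_qGenocchiFactor_pow (α : ℕ) (x y : ℂ) :
    qGenocchiSeries q α x y = qGenocchiFactor q ^ α * qExpSeries q x * qExpSeries' q y := rfl

lemma qGenocchiSeries_eq_mul (α : ℕ) (x y : ℂ) :
    qGenocchiSeries q α x y = qGenocchiSeries q α 0 y * qExpSeries q x := by
  simp only [qGenocchiSeries, qExpSeries_zero]; ring

lemma qExpSeries_one_mul_qGenocchiSeries {α : ℕ} (hα : 1 ≤ α) (x y : ℂ) :
    qExpSeries q 1 * qGenocchiSeries q α x y =
      C 2 * X * qGenocchiSeries q (α - 1) x y - qGenocchiSeries q α x y := by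
  obtain ⟨β, rfl⟩ := Nat.exists_eq_add_of_le' hα
  have h := qExpSeries_one_mul_qGenocchiFactor q
  simp only [qGenocchiSeries_eq_qGenocchiFactor_pow, Nat.add_sub_cancel, pow_succ]
  linear_combination (qGenocchiFactor q ^ β * qExpSeries q x * qExpSeries' q y) * h

lemma qGenocchiSeries_eq_qEgf (hq : ∀ n : ℕ, qInt q (n + 1) ≠ 0) (α : ℕ) (x y : ℂ) :
    qGenocchiSeries q α x y = qEgf q (qGenocchi q α x y) :=
  eq_qEgf_of_coeff q hq fun _ => rfl

lemma qEgf_qBernoulli (hq : ∀ n : ℕ, qInt q (n + 1) ≠ 0) (x : ℂ) :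
    qEgf q (qBernoulli q x 0) = (qBernoulliKernel q)⁻¹ * qExpSeries q x := by
  refine (eq_qEgf_of_coeff q hq fun n => ?_).symm
  rw [qBernoulli, qExpSeries'_zero, mul_one, qBernoulliKernel]

lemma X_mul_qBernoulliKernel : X * qBernoulliKernel q = qExpSeries q 1 - 1 := by
  ext (_ | k)
  · simp [qExpSeries_eq_qEgf]
  · simp [qBernoulliKernel, qExpSeries_eq_qEgf, coeff_succ_X_mul]

lemma rescale_qExpSeries (c x : ℂ) : rescale c (qExpSeries q x) = qExpSeries q (c * x) := by
  simp only [qExpSeries_eq_qEgf, rescale_qEgf, mul_pow]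

lemma X_mul_rescale_qBernoulliKernel {c : ℂ} (hc : c ≠ 0) :
    X * rescale c⁻¹ (qBernoulliKernel q) = C c * (qExpSeries q c⁻¹ - 1) := by
  have h := congrArg (rescale c⁻¹) (X_mul_qBernoulliKernel q)
  rw [map_mul, rescale_X, map_sub, map_one, rescale_qExpSeries, mul_one] at h
  rw [← h, ← mul_assoc, ← mul_assoc, ← map_mul, mul_inv_cancel₀ hc, map_one, one_mul]

lemma X_mul_qGenocchiSeries_mul_rescale_qBernoulliKernel
    (hq : ∀ n : ℕ, qInt q (n + 1) ≠ 0) {α : ℕ} (hα : 1 ≤ α) {c : ℂ} (hc : c ≠ 0) (y : ℂ) :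
    X * (qGenocchiSeries q α 0 y * rescale c⁻¹ (qBernoulliKernel q)) =
      C c * (C 2 * X * (qGenocchiSeries q (α - 1) 0 y * qEgf q (qAddPow q c⁻¹ (-1))) -
        qGenocchiSeries q α 0 y * qEgf q (qAddPow q c⁻¹ (-1)) - qGenocchiSeries q α 0 y) := by
  have h1 := X_mul_rescale_qBernoulliKernel q hc
  have h2 := qExpSeries_one_mul_qGenocchiSeries q hα 0 y
  have h3 := qExpSeries_one_mul_qExpSeries'_neg_one q hq
  have h4 := qExpSeries_mul_qExpSeries' q hq c⁻¹ (-1)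
  set G := qGenocchiSeries q α 0 y
  set F := qEgf q (qAddPow q c⁻¹ (-1))
  linear_combination G * h1 + C c * F * h2 + C c * qExpSeries q 1 * G * h4 -
    C c * G * qExpSeries q c⁻¹ * h3

lemma qGenocchiSeries_mul_qEgf (hq : ∀ n : ℕ, qInt q (n + 1) ≠ 0) (α : ℕ) (y : ℂ)
    (a : ℕ → ℂ) :
    qGenocchiSeries q α 0 y * qEgf q a =
      qEgf q fun k => ∑ j ∈ range (k + 1), qBinom q k j * a (k - j) * qGenocchi q α 0 y j := by
  simp only [qGenocchiSeries_eq_qEgf q hq, qEgf_mul q hq, mul_right_comm]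

lemma qGenocchiSeries_mul_rescale_qBernoulliKernel
    (hq : ∀ n : ℕ, qInt q (n + 1) ≠ 0) {α : ℕ} (hα : 1 ≤ α) {c : ℂ} (hc : c ≠ 0) (y : ℂ) :
    qGenocchiSeries q α 0 y * rescale c⁻¹ (qBernoulliKernel q) = qEgf q fun k =>
      c / qInt q (k + 1) *
        (2 * qInt q (k + 1) * (∑ j ∈ range (k + 1),
            qBinom q k j * qAddPow q c⁻¹ (-1) (k - j) * qGenocchi q (α - 1) 0 y j) -
          (∑ j ∈ range (k + 2),
            qBinom q (k + 1) j * qAddPow q c⁻¹ (-1) (k + 1 - j) * qGenocchi q α 0 y j) -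
          qGenocchi q α 0 y (k + 1)) := by
  refine eq_qEgf_of_coeff q hq fun k => ?_
  have h := congrArg (coeff (k + 1))
    (X_mul_qGenocchiSeries_mul_rescale_qBernoulliKernel q hq hα hc y)
  rw [coeff_succ_X_mul] at h
  rw [h, coeff_C_mul, map_sub, map_sub, mul_assoc, coeff_C_mul, coeff_succ_X_mul,
    qGenocchiSeries_mul_qEgf q hq, qGenocchiSeries_mul_qEgf q hq, qGenocchiSeries_eq_qEgf q hq]
  simp only [coeff_qEgf, qFact_succ q k]
  field_simp [qFact_ne_zero q hq, hq]

lemma qGenocchiSeries_eq_mul_qEgf_qBernoulli (hq : ∀ n : ℕ, qInt q (n + 1) ≠ 0) (α : ℕ)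
    {c : ℂ} (hc : c ≠ 0) (x y : ℂ) :
    qGenocchiSeries q α x y = qGenocchiSeries q α 0 y * rescale c⁻¹ (qBernoulliKernel q) *
      qEgf q fun j => c⁻¹ ^ j * qBernoulli q (c * x) 0 j := by
  have hK : constantCoeff (qBernoulliKernel q) ≠ 0 := by simp [qBernoulliKernel, qFact, qInt]
  rw [← rescale_qEgf, qEgf_qBernoulli q hq, map_mul, rescale_qExpSeries, inv_mul_cancel_left₀ hc,
    mul_assoc, ← mul_assoc (rescale _ _), ← map_mul, PowerSeries.mul_inv_cancel _ hK, map_one,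
    one_mul, qGenocchiSeries_eq_mul]

end

/-- Srivastava–Pintér type theorem (second form). -/
theorem qGenocchi_srivastava_pinter' (q : ℂ) (hq : ∀ n : ℕ, qInt q (n + 1) ≠ 0)
    (α : ℕ) (hα : 1 ≤ α) (m : ℕ) (hm : 1 ≤ m) (n : ℕ) (x y : ℂ) :
    qGenocchi q α x y n =
      ∑ k ∈ Finset.range (n + 1),
        qBinom q n k * ((m : ℂ) ^ ((k : ℤ) + 1 - (n : ℤ)) / qInt q (k + 1)) *
          (2 * qInt q (k + 1) *
              (∑ j ∈ Finset.range (k + 1),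
                qBinom q k j * qAddPow q ((m : ℂ)⁻¹) (-1) (k - j) *
                  qGenocchi q (α - 1) 0 y j) -
            (∑ j ∈ Finset.range (k + 2),
              qBinom q (k + 1) j * qAddPow q ((m : ℂ)⁻¹) (-1) (k + 1 - j) *
                qGenocchi q α 0 y j) -
            qGenocchi q α 0 y (k + 1)) *
          qBernoulli q ((m : ℂ) * x) 0 (n - k) := by
  have hc : (m : ℂ) ≠ 0 := Nat.cast_ne_zero.mpr (by omega)
  rw [qGenocchi, qGenocchiSeries_eq_mul_qEgf_qBernoulli q hq α hc,
    qGenocchiSeries_mul_rescale_qBernoulliKernel q hq hα hc, qEgf_mul q hq, coeff_qEgf,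
    mul_div_cancel₀ _ (qFact_ne_zero q hq n)]
  refine sum_congr rfl fun k hk => ?_
  have hpow : (m : ℂ) ^ ((k : ℤ) + 1 - (n : ℤ)) = m * (m : ℂ)⁻¹ ^ (n - k) := by
    have hkn : k ≤ n := Nat.lt_succ_iff.mp (mem_range.mp hk)
    rw [show (k : ℤ) + 1 - n = 1 - (n - k : ℕ) by push_cast [hkn]; ring, zpow_sub₀ hc,
      zpow_one, zpow_natCast, inv_pow, div_eq_mul_inv]
  rw [hpow]
  ring
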